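/- Let r ∈ (0,1), a > 0, and m ≤ n positive integers. Define f(Z) = log(1 - e^{-a(1-r)}z_{11}) - log(1 - z_{11}) (principal logarithms) for Z = (z_{kl}) ∈ R_I(m,n). Then for all Z ∈ R_I(m,n), the quantity (1 - Σ_{l=1}^n|z_{1l}|²)(1 - Σ_{k=1}^m|z_{k1}|²)·|∂f/∂z_{11}(Z)|² is at most 16. -/

import Mathlib

open Matrix ComplexOrder

theorem diag_pos' {k : ℕ} (M : Matrix (Fin k) (Fin k) ℂ) (h : M.PosDef) (i : Fin k) :
    0 < (M i i).re := by
  have h1 : 0 < M i i := h.diag_pos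
  exact (Complex.lt_def.mp h1).1

theorem stmt_18 (m n : ℕ) (hm : 0 < m) (hn : 0 < n) (hmn : m ≤ n)
    (r a : ℝ) (hr : r ∈ Set.Ioo (0:ℝ) 1) (ha : 0 < a)
    (Z : Matrix (Fin m) (Fin n) ℂ) (hZ : ((1 : Matrix (Fin m) (Fin m) ℂ) - Z * Zᴴ).PosDef) :
    (1 - ∑ l : Fin n, ‖Z ⟨0, hm⟩ l‖ ^ 2) *
      (1 - ∑ k : Fin m, ‖Z k ⟨0, hn⟩‖ ^ 2) *
      ‖(-(Real.exp (-a * (1 - r)) : ℂ)) /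
          (1 - (Real.exp (-a * (1 - r)) : ℂ) * Z ⟨0, hm⟩ ⟨0, hn⟩)
        + 1 / (1 - Z ⟨0, hm⟩ ⟨0, hn⟩)‖ ^ 2 ≤ 16 := by
  set i0 : Fin m := ⟨0, hm⟩
  set j0 : Fin n := ⟨0, hn⟩
  set z : ℂ := Z i0 j0 with hz_def
  set s : ℝ := Real.exp (-a * (1 - r)) with hs_def
  set t : ℝ := ‖z‖ with ht_def
  set A : ℝ := ∑ l : Fin n, ‖Z i0 l‖ ^ 2 with hA_def
  set B : ℝ := ∑ k : Fin m, ‖Z k j0‖ ^ 2 with hB_def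
  have hs0 : 0 < s := Real.exp_pos _
  have hs1 : s ≤ 1 := (Real.exp_le_one_iff.mpr (by nlinarith [hr.1, hr.2]))
  -- A < 1 from PosDef diagonal entry
  have hentry : (((1 : Matrix (Fin m) (Fin m) ℂ) - Z * Zᴴ) i0 i0).re = 1 - A := by
    simp only [Matrix.sub_apply, Matrix.one_apply_eq, Matrix.mul_apply,
      Matrix.conjTranspose_apply, Complex.sub_re, Complex.one_re, Complex.re_sum]
    congr 1
    rw [hA_def]
    congr 1
    funext l
    rw [← Complex.normSq_eq_norm_sq]
    rw [show star (Z i0 l) = (starRingEnd ℂ) (Z i0 l) from rfl, Complex.mul_conj]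
    simp
  have hA1 : A < 1 := by
    have := diag_pos' _ hZ i0
    rw [hentry] at this
    linarith
  have hA0 : 0 < 1 - A := by linarith
  -- t^2 ≤ A and t^2 ≤ B
  have htA : t ^ 2 ≤ A := by
    rw [hA_def, ht_def, hz_def]
    exact Finset.single_le_sum (f := fun l => ‖Z i0 l‖ ^ 2)
      (fun l _ => sq_nonneg _) (Finset.mem_univ j0)
  have htB : t ^ 2 ≤ B := by
    rw [hB_def, ht_def, hz_def]
    exact Finset.single_le_sum (f := fun k => ‖Z k j0‖ ^ 2)
      (fun k _ => sq_nonneg _) (Finset.mem_univ i0)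
  have ht0 : 0 ≤ t := norm_nonneg z
  have ht1 : t < 1 := by nlinarith
  -- denominators
  have hd2 : 1 - t ≤ ‖1 - z‖ := by
    have h := norm_add_le (1 - z) z
    simp only [sub_add_cancel] at h
    simpa [ht_def] using by linarith [h, (norm_one : ‖(1:ℂ)‖ = 1)]
  have hd1 : 1 - s * t ≤ ‖1 - (s:ℂ) * z‖ := by
    have h := norm_add_le (1 - (s:ℂ) * z) ((s:ℂ) * z)
    simp only [sub_add_cancel] at h
    have habs : ‖(s:ℂ) * z‖ = s * t := by
      rw [norm_mul, Complex.norm_real, Real.norm_eq_abs, abs_of_pos hs0, ht_def]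
    rw [habs] at h
    linarith [h, (norm_one : ‖(1:ℂ)‖ = 1)]
  have hst : 0 < 1 - s * t := by nlinarith
  have htpos : 0 < 1 - t := by linarith
  -- bound on |g|
  set g : ℂ := (-(s : ℂ)) / (1 - (s:ℂ) * z) + 1 / (1 - z) with hg_def
  set G : ℝ := ‖g‖ with hG_def
  have hG0 : 0 ≤ G := norm_nonneg g
  have hg : G ≤ 2 / (1 - t) := by
    have h1 : ‖(-(s : ℂ)) / (1 - (s:ℂ) * z)‖ ≤ s / (1 - s * t) := by
      rw [norm_div, norm_neg, Complex.norm_real, Real.norm_eq_abs, abs_of_pos hs0]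
      exact div_le_div_of_nonneg_left (le_of_lt hs0) hst hd1
    have h2 : ‖1 / (1 - z)‖ ≤ 1 / (1 - t) := by
      rw [norm_div, norm_one]
      exact div_le_div_of_nonneg_left one_pos.le htpos hd2
    have h3 : s / (1 - s * t) ≤ 1 / (1 - t) := by
      rw [div_le_div_iff₀ hst htpos]
      nlinarith
    calc G ≤ ‖(-(s : ℂ)) / (1 - (s:ℂ) * z)‖ + ‖1 / (1 - z)‖ :=
            norm_add_le _ _
      _ ≤ 1 / (1 - t) + 1 / (1 - t) := by linarith
      _ = 2 / (1 - t) := by ring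
  have hGt : G * (1 - t) ≤ 2 := by
    rw [div_eq_mul_inv] at hg
    calc G * (1 - t) ≤ (2 * (1 - t)⁻¹) * (1 - t) :=
          mul_le_mul_of_nonneg_right hg (by linarith)
      _ = 2 := by field_simp
  -- conclude
  show (1 - A) * (1 - B) * G ^ 2 ≤ 16
  clear_value G g t z s A B
  clear hg_def hG_def hz_def ht_def hs_def hA_def hB_def hentry hd1 hd2 hg hZ Z
  by_cases hB1 : B < 1
  · have hB0 : 0 < 1 - B := by linarith
    have h1 : 1 - A ≤ 1 - t ^ 2 := by linarith
    have h2 : 1 - B ≤ 1 - t ^ 2 := by linarith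
    have hkey : (1 - t ^ 2) * G ≤ 2 * (1 + t) := by nlinarith
    have hprod : (1 - A) * (1 - B) ≤ (1 - t ^ 2) ^ 2 := by nlinarith
    have hfin : ((1 - t ^ 2) * G) ^ 2 ≤ (2 * (1 + t)) ^ 2 := by
      apply sq_le_sq' _ hkey
      nlinarith
    nlinarith [sq_nonneg G, sq_nonneg (1 - t^2)]
  · push_neg at hB1
    have : (1 - A) * (1 - B) ≤ 0 :=
      mul_nonpos_of_nonneg_of_nonpos (by linarith) (by linarith)
    nlinarith [sq_nonneg G]
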